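/- Let J ≥ 2 and let C be a type-I quasi-cyclic code with J×L polynomial parity-check matrix H(x) over F_2[x]/(x^r−1) (entries are 0 or monomials), J+1 ≤ L. If the Tanner graph of H(x) contains a 4-cycle, i.e., there exist row indices j1 ≠ j2 and column indices i1 ≠ i2 such that h_{j1,i1}, h_{j1,i2}, h_{j2,i1}, h_{j2,i2} are all monomials and h_{j1,i1}·h_{j2,i2} = h_{j1,i2}·h_{j2,i1} in F_2[x]/(x^r−1), then d_min(C) ≤ (J+1)! − 2(J−1)!. -/

import Mathlib

open Matrix BigOperators

noncomputable section

/-- The ring `F₂[x]/(xʳ−1)`, realized as the group algebra of `ℤ/rℤ` over `F₂`.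
    (For `r > 0` this is isomorphic to `F₂[x]/(xʳ−1)`, and the canonical representative
    of degree `< r` corresponds to the `Finsupp` on `ZMod r`.) -/
abbrev Rr (r : ℕ) : Type := AddMonoidAlgebra (ZMod 2) (ZMod r)

/-- The monomial `xᵃ`. -/
def mono {r : ℕ} (a : ZMod r) : Rr r := AddMonoidAlgebra.single a 1

/-- Weight of an element of `Rr r`: the number of nonzero coefficients. -/
def wt {r : ℕ} (p : Rr r) : ℕ := p.coeff.support.card

/-- Square submatrix of `H` given by the columns in `T`. -/
def colSub {J L : ℕ} {R : Type*} (H : Matrix (Fin J) (Fin L) R) (T : Finset (Fin L))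
    (h : T.card = J) : Matrix (Fin J) (Fin J) R :=
  fun j k => H j (T.orderIsoOfFin h k)

/-- Square submatrix of `H` given by the columns in `S \ {i}` where `S` has `J+1` elements. -/
def eraseSub {J L : ℕ} {R : Type*} (H : Matrix (Fin J) (Fin L) R) (S : Finset (Fin L))
    (hS : S.card = J + 1) (i : Fin L) (hi : i ∈ S) : Matrix (Fin J) (Fin J) R :=
  colSub H (S.erase i) (by rw [Finset.card_erase_of_mem hi, hS]; rfl)

def isCodeword {r : ℕ} {ι κ : Type*} [Fintype κ] (H : Matrix ι κ (Rr r)) (c : κ → Rr r) : Prop :=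
  ∀ j, ∑ i, H j i * c i = 0

/-- Hamming weight of a vector over `Rr r`. -/
def wH {r : ℕ} {κ : Type*} [Fintype κ] (c : κ → Rr r) : ℕ := ∑ i, wt (c i)

/-- Minimum Hamming distance of the code with parity-check matrix `H`. -/
def dmin {r : ℕ} {ι κ : Type*} [Fintype κ] (H : Matrix ι κ (Rr r)) : ℕ :=
  sInf {w | ∃ c, isCodeword H c ∧ c ≠ 0 ∧ wH c = w}


/-!
Fix a set `S` of `J + 1` columns containing `i1, i2`, and a largest non-vanishing `t × t` minor
of `H` with columns in `S`. Adjoining one more column of `S`, the signed `t`-minors of the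
resulting `t × (t+1)` block, extended by zero, form a nonzero codeword: pairing it with a row
of `H` is a `(t+1)`-minor, which vanishes by maximality. Its weight is at most the sum of the
weights of these minors. In characteristic 2 a determinant is a sum of `t!` products of
entries, each of weight `≤ 1`, so for `t < J` the weight is at most `(t+1)! ≤ J!`. For `t = J`,
in a minor containing both 4-cycle columns the `2 (J-2)!` products through the cycle cancel in
pairs, and at most two of the `J + 1` minors miss a cycle column; hence the weight is at most
`2 J! + (J-1) (J! - 2 (J-2)!) = (J+1)! - 2 (J-1)!`.
-/

open Finset
open scoped Nat

section Weight

variable {r : ℕ}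

instance : CharP (Rr r) 2 := charP_of_injective_algebraMap' (ZMod 2) 2

@[simp] lemma wt_zero : wt (0 : Rr r) = 0 := by simp [wt]

@[simp] lemma wt_mono (a : ZMod r) : wt (mono a) = 1 := by
  simp [wt, mono]

lemma wt_add_le (x y : Rr r) : wt (x + y) ≤ wt x + wt y :=
  (card_le_card Finsupp.support_add).trans (card_union_le _ _)

lemma wt_mul_le (x y : Rr r) : wt (x * y) ≤ wt x * wt y := by
  classical
  exact (card_le_card (AddMonoidAlgebra.support_coeff_mul_subset x y)).trans card_add_le

lemma wt_sum_le_card {α : Type*} (s : Finset α) (f : α → Rr r) (hf : ∀ x ∈ s, wt (f x) ≤ 1) :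
    wt (∑ x ∈ s, f x) ≤ #s := by
  classical
  induction s using Finset.induction_on with
  | empty => simp
  | insert a s ha ih =>
    rw [sum_insert ha, card_insert_of_notMem ha, add_comm #s]
    exact (wt_add_le _ _).trans (add_le_add (hf a (mem_insert_self a s))
      (ih fun x hx => hf x (mem_insert_of_mem hx)))

lemma wt_prod_le_one {α : Type*} (s : Finset α) (f : α → Rr r) (hf : ∀ x ∈ s, wt (f x) ≤ 1) :
    wt (∏ x ∈ s, f x) ≤ 1 := by
  classical
  induction s using Finset.induction_on with
  | empty => simp [wt, AddMonoidAlgebra.one_def]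
  | insert a s ha ih =>
    rw [prod_insert ha]
    exact (wt_mul_le _ _).trans (mul_le_one' (hf a (mem_insert_self a s))
      (ih fun x hx => hf x (mem_insert_of_mem hx)))

end Weight

section Perm

open Equiv

lemma card_perm_apply_eq_of_injective {α β : Type*} [Fintype α] [DecidableEq α] [Fintype β]
    {f g : β → α} (hf : Function.Injective f) (hg : Function.Injective g) :
    #{σ : Perm α | ∀ b, σ (f b) = g b} = (Fintype.card α - Fintype.card β)! := by
  obtain ⟨τ, hτ⟩ := Perm.exists_extending_pair f g hf hg
  have hfix : #{σ : Perm α | ∀ b, σ (f b) = g b} = #{σ : Perm α | ∀ b, σ (f b) = f b} := by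
    refine card_bij' (fun σ _ => τ⁻¹ * σ) (fun σ _ => τ * σ) ?_ ?_ ?_ ?_ <;>
      simp_all [Equiv.symm_apply_eq]
  have hstab : {σ : Perm α // ∀ b, σ (f b) = f b} ≃ Perm {x // x ∉ Set.range f} :=
    (Equiv.subtypeEquivRight fun σ => by simp).trans (Perm.subtypeEquivSubtypePerm _).symm
  rw [hfix, ← Fintype.card_subtype, Fintype.card_congr hstab, Fintype.card_perm,
    Fintype.card_subtype_compl, Set.card_range_of_injective hf]

end Perm

section CharTwoDet

open Equiv

variable {R n : Type*} [CommRing R] [Fintype n] [DecidableEq n]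

lemma prod_mul_swap_eq_prod (M : Matrix n n R) (σ : Perm n) {k₁ k₂ : n} (hk : k₁ ≠ k₂)
    (h : M (σ k₂) k₁ * M (σ k₁) k₂ = M (σ k₁) k₁ * M (σ k₂) k₂) :
    ∏ i, M ((σ * swap k₁ k₂) i) i = ∏ i, M (σ i) i := by
  rw [← prod_mul_prod_compl {k₁, k₂}, ← prod_mul_prod_compl {k₁, k₂} fun i => M (σ i) i,
    prod_pair hk, prod_pair hk]
  congr 1
  · simpa using h
  · refine prod_congr rfl fun i hi => ?_
    simp only [mem_compl, mem_insert, mem_singleton, not_or] at hi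
    rw [Perm.mul_apply, swap_apply_of_ne_of_ne hi.1 hi.2]

variable [CharP R 2]

lemma det_eq_sum_prod_of_charTwo (M : Matrix n n R) :
    M.det = ∑ σ : Perm n, ∏ i, M (σ i) i := by
  rw [det_apply']
  refine sum_congr rfl fun σ _ => ?_
  rcases Int.units_eq_one_or (Perm.sign σ) with h | h <;> simp [h, CharTwo.neg_eq]

/-- The terms cancel in pairs: composing with the transposition `(k₁ k₂)` does not change the
product. -/
lemma sum_prod_eq_zero_of_fourCycle (M : Matrix n n R) {j₁ j₂ k₁ k₂ : n} (hk : k₁ ≠ k₂)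
    (hc : M j₁ k₁ * M j₂ k₂ = M j₁ k₂ * M j₂ k₁) :
    ∑ σ ∈ {σ : Perm n | σ k₁ = j₁ ∧ σ k₂ = j₂ ∨ σ k₁ = j₂ ∧ σ k₂ = j₁}, ∏ i, M (σ i) i = 0 := by
  refine sum_involution (fun σ _ => σ * swap k₁ k₂) (fun σ hσ => ?_) (fun σ _ _ h => ?_)
    (fun σ hσ => ?_) (fun σ _ => by simp [mul_assoc])
  · rw [prod_mul_swap_eq_prod M σ hk, CharTwo.add_self_eq_zero]
    simp only [mem_filter, mem_univ, true_and] at hσ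
    rcases hσ with ⟨h₁, h₂⟩ | ⟨h₁, h₂⟩ <;> rw [h₁, h₂]
    · rw [mul_comm, hc]
    · rw [hc, mul_comm]
  · have h₂₁ : σ k₂ = σ k₁ := by simpa using congr($h k₁)
    exact hk (σ.injective h₂₁).symm
  · simp only [mem_filter, mem_univ, true_and, Perm.mul_apply, swap_apply_left,
      swap_apply_right] at hσ ⊢
    tauto

lemma card_perm_apply_eq_pair {j₁ j₂ k₁ k₂ : n} (hj : j₁ ≠ j₂) (hk : k₁ ≠ k₂) :
    #{σ : Perm n | σ k₁ = j₁ ∧ σ k₂ = j₂} = (Fintype.card n - 2)! := by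
  have hinj : ∀ {a b : n}, a ≠ b → Function.Injective ![a, b] := by
    intro a b h
    simp [Function.Injective, Fin.forall_fin_two, h, h.symm]
  simpa [Fin.forall_fin_two] using card_perm_apply_eq_of_injective (hinj hk) (hinj hj)

end CharTwoDet

section DetWeight

open Equiv

variable {r : ℕ} {n : Type*} [Fintype n]

lemma wt_sum_prod_le_card (M : Matrix n n (Rr r)) (hM : ∀ i j, wt (M i j) ≤ 1)
    (s : Finset (Perm n)) : wt (∑ σ ∈ s, ∏ i, M (σ i) i) ≤ #s :=
  wt_sum_le_card _ _ fun _ _ => wt_prod_le_one _ _ fun _ _ => hM _ _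

variable [DecidableEq n]

lemma wt_det_le_factorial (M : Matrix n n (Rr r)) (hM : ∀ i j, wt (M i j) ≤ 1) :
    wt M.det ≤ (Fintype.card n)! := by
  simpa [det_eq_sum_prod_of_charTwo, Fintype.card_perm] using wt_sum_prod_le_card M hM univ

lemma wt_det_le_of_fourCycle (M : Matrix n n (Rr r)) (hM : ∀ i j, wt (M i j) ≤ 1)
    {j₁ j₂ k₁ k₂ : n} (hj : j₁ ≠ j₂) (hk : k₁ ≠ k₂)
    (hc : M j₁ k₁ * M j₂ k₂ = M j₁ k₂ * M j₂ k₁) :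
    wt M.det ≤ (Fintype.card n)! - 2 * (Fintype.card n - 2)! := by
  set P : Perm n → Prop := fun σ => σ k₁ = j₁ ∧ σ k₂ = j₂ ∨ σ k₁ = j₂ ∧ σ k₂ = j₁
  have hP : #{σ | P σ} = 2 * (Fintype.card n - 2)! := by
    rw [filter_or, card_union_of_disjoint
      (disjoint_filter.2 fun σ _ h h' => hj (h.1.symm.trans h'.1)),
      card_perm_apply_eq_pair hj hk, card_perm_apply_eq_pair hj.symm hk, two_mul]
  have hnotP : #{σ | ¬P σ} = (Fintype.card n)! - 2 * (Fintype.card n - 2)! := by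
    have := card_filter_add_card_filter_not (s := univ) fun σ => P σ
    rw [card_univ, Fintype.card_perm] at this
    omega
  have hdet : M.det = ∑ σ ∈ {σ | ¬P σ}, ∏ i, M (σ i) i := by
    rw [det_eq_sum_prod_of_charTwo, ← sum_filter_add_sum_filter_not univ P,
      sum_prod_eq_zero_of_fourCycle M hk hc, zero_add]
  rw [hdet, ← hnotP]
  exact wt_sum_prod_le_card M hM _

end DetWeight

section Cofactor

variable {R ι κ : Type*} [CommRing R]

def cofactorVec {n : ℕ} (M : Matrix (Fin n) (Fin (n + 1)) R) : Fin (n + 1) → R :=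
  fun p => (-1) ^ (p : ℕ) * (M.submatrix id p.succAbove).det

lemma cofactorVec_zero {n : ℕ} (M : Matrix (Fin n) (Fin (n + 1)) R) :
    cofactorVec M 0 = (M.submatrix id Fin.succ).det := by
  simp [cofactorVec]

lemma mulVec_cofactorVec_submatrix {n : ℕ} (N : Matrix ι (Fin (n + 1)) R) (a : Fin n → ι)
    (j : ι) : (N *ᵥ cofactorVec (N.submatrix a id)) j = (N.submatrix (Fin.cons j a) id).det := by
  rw [det_succ_row_zero]
  simp only [mulVec, dotProduct, cofactorVec]
  refine sum_congr rfl fun p _ => ?_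
  simp only [submatrix_apply, Fin.cons_zero, id, submatrix_submatrix, Function.comp_def,
    Fin.cons_succ]
  ring

lemma mulVec_extend_zero [Fintype κ] {m : Type*} [Fintype m] (M : Matrix ι κ R) {b : m → κ}
    (hb : Function.Injective b) (v : m → R) :
    M *ᵥ Function.extend b v 0 = M.submatrix id b *ᵥ v := by
  ext j
  refine (Fintype.sum_of_injective b hb _ _ (fun i hi => ?_) fun p => ?_).symm
  · rw [Function.extend_apply' _ _ _ (by simpa using hi), Pi.zero_apply, mul_zero]
  · rw [hb.extend_apply]; rfl

lemma det_submatrix_eq_zero_of_not_injective_left {m : Type*} [Fintype m] [DecidableEq m]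
    (M : Matrix ι κ R) {a : m → ι} (b : m → κ) (ha : ¬Function.Injective a) :
    (M.submatrix a b).det = 0 := by
  obtain ⟨p, q, hpq, hne⟩ := Function.not_injective_iff.mp ha
  exact det_zero_of_row_eq hne (by ext; simp [hpq])

lemma det_submatrix_eq_zero_of_not_injective_right {m : Type*} [Fintype m] [DecidableEq m]
    (M : Matrix ι κ R) (a : m → ι) {b : m → κ} (hb : ¬Function.Injective b) :
    (M.submatrix a b).det = 0 := by
  obtain ⟨p, q, hpq, hne⟩ := Function.not_injective_iff.mp hb
  exact det_zero_of_column_eq hne (by simp [hpq])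

lemma exists_maximal_nonzero_minor [Nontrivial R] [Fintype ι] (M : Matrix ι κ R) (S : Set κ) :
    ∃ t, ∃ a : Fin t → ι, ∃ b : Fin t → κ, (∀ q, b q ∈ S) ∧ (M.submatrix a b).det ≠ 0 ∧
      ∀ (a' : Fin (t + 1) → ι) (b' : Fin (t + 1) → κ), (∀ q, b' q ∈ S) →
        (M.submatrix a' b').det = 0 := by
  classical
  let P : ℕ → Prop := fun m => ∀ (a : Fin m → ι) (b : Fin m → κ), (∀ q, b q ∈ S) →
    (M.submatrix a b).det = 0
  have hP : ∃ m, P m := ⟨Fintype.card ι + 1, fun a b _ =>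
    det_submatrix_eq_zero_of_not_injective_left M b fun ha => by
      simpa using Fintype.card_le_of_injective a ha⟩
  have hpos : Nat.find hP ≠ 0 := by
    intro h0
    have h := Nat.find_spec hP
    rw [h0] at h
    simpa using h finZeroElim finZeroElim fun q => q.elim0
  obtain ⟨t, ht⟩ := Nat.exists_eq_succ_of_ne_zero hpos
  have hmin := Nat.find_min hP (ht ▸ Nat.lt_succ_self t)
  simp only [P, not_forall] at hmin
  obtain ⟨a, b, hbS, hdet⟩ := hmin
  have hmax := Nat.find_spec hP
  rw [ht] at hmax
  exact ⟨t, a, b, hbS, hdet, hmax⟩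

lemma exists_maximal_nonzero_minor_succ [Nontrivial R] [Fintype ι] (M : Matrix ι κ R)
    (S : Finset κ) (hS : Fintype.card ι < #S) :
    ∃ t ≤ Fintype.card ι, ∃ a : Fin t → ι, ∃ b : Fin (t + 1) → κ,
      Function.Injective a ∧ Function.Injective b ∧ (∀ q, b q ∈ S) ∧
      (M.submatrix a (b ∘ Fin.succ)).det ≠ 0 ∧
      ∀ a' : Fin (t + 1) → ι, (M.submatrix a' b).det = 0 := by
  obtain ⟨t, a, b, hbS, hdet, hmax⟩ := exists_maximal_nonzero_minor M (S : Set κ)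
  have ha : Function.Injective a := by_contra fun h =>
    hdet (det_submatrix_eq_zero_of_not_injective_left M b h)
  have hb : Function.Injective b := by_contra fun h =>
    hdet (det_submatrix_eq_zero_of_not_injective_right M a h)
  have ht : t ≤ Fintype.card ι := by simpa using Fintype.card_le_of_injective a ha
  obtain ⟨i₀, hi₀S, hi₀b⟩ : ∃ i₀ ∈ S, i₀ ∉ Set.range b := by
    by_contra! h
    have : #S ≤ t := by
      simpa using card_le_card_of_surjOn b (s := univ) fun i hi => by simpa using h i hi
    omega
  have hbS' : ∀ q, (Fin.cons i₀ b : Fin (t + 1) → κ) q ∈ S := Fin.forall_fin_succ.2 ⟨hi₀S, hbS⟩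
  exact ⟨t, ht, a, Fin.cons i₀ b, ha, Fin.cons_injective_iff.2 ⟨hi₀b, hb⟩, hbS',
    by simpa using hdet, fun a' => hmax a' _ hbS'⟩

end Cofactor

section Codeword

variable {r : ℕ} {ι κ : Type*} [Fintype κ]

lemma dmin_le_wH {H : Matrix ι κ (Rr r)} {c : κ → Rr r} (hc : isCodeword H c) (hne : c ≠ 0) :
    dmin H ≤ wH c :=
  Nat.sInf_le ⟨c, hc, hne, rfl⟩

lemma wH_extend_zero {m : Type*} [Fintype m] {b : m → κ} (hb : Function.Injective b)
    (v : m → Rr r) : wH (Function.extend b v 0) = wH v :=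
  (Fintype.sum_of_injective b hb _ _ (fun i hi => by
    rw [Function.extend_apply' _ _ _ (by simpa using hi)]; exact wt_zero)
    fun p => by rw [hb.extend_apply]).symm

lemma wt_cofactorVec {n : ℕ} (M : Matrix (Fin n) (Fin (n + 1)) (Rr r)) (p : Fin (n + 1)) :
    wt (cofactorVec M p) = wt (M.submatrix id p.succAbove).det := by
  simp [cofactorVec, CharTwo.neg_eq]

/-- The witness is the cofactor vector of the `t × (t+1)` submatrix, extended by zero. -/
lemma dmin_le_sum_wt_det (H : Matrix ι κ (Rr r)) {t : ℕ} (a : Fin t → ι) {b : Fin (t + 1) → κ}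
    (hb : Function.Injective b) (hdet : (H.submatrix a (b ∘ Fin.succ)).det ≠ 0)
    (hmax : ∀ a' : Fin (t + 1) → ι, (H.submatrix a' b).det = 0) :
    dmin H ≤ ∑ p : Fin (t + 1), wt (H.submatrix a (b ∘ p.succAbove)).det := by
  set v := cofactorVec (H.submatrix a b)
  have hcw : isCodeword H (Function.extend b v 0) := fun j =>
    (congr_fun (mulVec_extend_zero H hb v) j).trans
      ((mulVec_cofactorVec_submatrix (H.submatrix id b) a j).trans (hmax _))
  have hne : Function.extend b v 0 ≠ 0 := fun h => hdet <| by
    simpa [hb.extend_apply, v, cofactorVec_zero] using congr_fun h (b 0)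
  calc dmin H ≤ wH (Function.extend b v 0) := dmin_le_wH hcw hne
    _ = ∑ p : Fin (t + 1), wt (H.submatrix a (b ∘ p.succAbove)).det := by
      rw [wH_extend_zero hb]
      exact sum_congr rfl fun p _ => wt_cofactorVec _ p

end Codeword

section Arithmetic

lemma factorial_le_factorial_succ_sub {n : ℕ} (hn : 2 ≤ n) : n ! ≤ (n + 1)! - 2 * (n - 1)! := by
  obtain ⟨m, rfl⟩ : ∃ m, n = m + 2 := ⟨n - 2, by omega⟩
  simp only [show m + 2 - 1 = m + 1 by omega, Nat.factorial_succ]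
  apply Nat.le_sub_of_add_le
  nlinarith [Nat.zero_le (m * m !), Nat.zero_le (m * m * m !), Nat.zero_le (m * m * m * m !)]

lemma succ_mul_factorial_sub_add_eq {n : ℕ} (hn : 2 ≤ n) :
    (n + 1) * ((n)! - 2 * (n - 2)!) + 2 * (n - 2)! * 2 = (n + 1)! - 2 * (n - 1)! := by
  obtain ⟨m, rfl⟩ : ∃ m, n = m + 2 := ⟨n - 2, by omega⟩
  simp only [show m + 2 - 1 = m + 1 by omega, Nat.add_sub_cancel, Nat.factorial_succ]
  have h₁ : 2 * m ! ≤ (m + 1 + 1) * ((m + 1) * m !) := by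
    nlinarith [Nat.zero_le (m * m !), Nat.zero_le (m * m * m !)]
  have h₂ : 2 * ((m + 1) * m !) ≤ (m + 2 + 1) * ((m + 1 + 1) * ((m + 1) * m !)) := by
    nlinarith [Nat.zero_le (m * m !), Nat.zero_le (m * m * m !), Nat.zero_le (m * m * m * m !)]
  zify [h₁, h₂]
  ring

end Arithmetic

section FourCycle

variable {r : ℕ} {ι κ : Type*} (H : Matrix ι κ (Rr r)) {j₁ j₂ : ι} {i₁ i₂ : κ}

lemma sum_wt_det_succAbove_le_factorial (hwt : ∀ j i, wt (H j i) ≤ 1) {t : ℕ} (a : Fin t → ι)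
    (b : Fin (t + 1) → κ) :
    ∑ p : Fin (t + 1), wt (H.submatrix a (b ∘ p.succAbove)).det ≤ (t + 1)! :=
  calc ∑ p : Fin (t + 1), wt (H.submatrix a (b ∘ p.succAbove)).det
      ≤ ∑ _p : Fin (t + 1), t ! := sum_le_sum fun p _ => by
        simpa using wt_det_le_factorial (H.submatrix a (b ∘ p.succAbove)) fun _ _ => hwt _ _
    _ = (t + 1)! := by simp [Nat.factorial_succ]

lemma wt_det_submatrix_le_of_fourCycle (hwt : ∀ j i, wt (H j i) ≤ 1) (hj : j₁ ≠ j₂)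
    (hi : i₁ ≠ i₂) (hcyc : H j₁ i₁ * H j₂ i₂ = H j₁ i₂ * H j₂ i₁) {n : ℕ} {a : Fin n → ι}
    {c : Fin n → κ} (ha₁ : j₁ ∈ Set.range a) (ha₂ : j₂ ∈ Set.range a)
    (hc₁ : i₁ ∈ Set.range c) (hc₂ : i₂ ∈ Set.range c) :
    wt (H.submatrix a c).det ≤ (n)! - 2 * (n - 2)! := by
  obtain ⟨q₁, rfl⟩ := ha₁
  obtain ⟨q₂, rfl⟩ := ha₂
  obtain ⟨k₁, rfl⟩ := hc₁
  obtain ⟨k₂, rfl⟩ := hc₂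
  simpa using wt_det_le_of_fourCycle (H.submatrix a c) (fun _ _ => hwt _ _)
    (ne_of_apply_ne a hj) (ne_of_apply_ne c hi) hcyc

lemma sum_wt_det_succAbove_le_of_fourCycle (hwt : ∀ j i, wt (H j i) ≤ 1) (hj : j₁ ≠ j₂)
    (hi : i₁ ≠ i₂) (hcyc : H j₁ i₁ * H j₂ i₂ = H j₁ i₂ * H j₂ i₁) {n : ℕ} (hn : 2 ≤ n)
    {a : Fin n → ι} {b : Fin (n + 1) → κ} (hb : Function.Injective b)
    (ha₁ : j₁ ∈ Set.range a) (ha₂ : j₂ ∈ Set.range a)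
    (hb₁ : i₁ ∈ Set.range b) (hb₂ : i₂ ∈ Set.range b) :
    ∑ p : Fin (n + 1), wt (H.submatrix a (b ∘ p.succAbove)).det ≤ (n + 1)! - 2 * (n - 1)! := by
  classical
  set e := 2 * (n - 2)!
  have he : e ≤ n ! :=
    calc e ≤ n * (n - 1)! := Nat.mul_le_mul hn (Nat.factorial_le (by omega))
      _ = n ! := Nat.mul_factorial_pred (by omega)
  have hrange : ∀ {i p}, i ∈ Set.range b → i ≠ b p → i ∈ Set.range (b ∘ p.succAbove) := by
    rintro i p ⟨q, rfl⟩ hqp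
    obtain ⟨z, hz⟩ := Fin.exists_succAbove_eq (ne_of_apply_ne b hqp)
    exact ⟨z, by simp [hz]⟩
  have hterm : ∀ p, wt (H.submatrix a (b ∘ p.succAbove)).det ≤
      ((n)! - e) + if b p ∈ ({i₁, i₂} : Finset κ) then e else 0 := by
    intro p
    split_ifs with hp
    · simpa [Nat.sub_add_cancel he] using
        wt_det_le_factorial (H.submatrix a (b ∘ p.succAbove)) fun _ _ => hwt _ _
    · simp only [mem_insert, mem_singleton, not_or] at hp
      simpa using wt_det_submatrix_le_of_fourCycle H hwt hj hi hcyc ha₁ ha₂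
        (hrange hb₁ (Ne.symm hp.1)) (hrange hb₂ (Ne.symm hp.2))
  have hcard : #{p | b p ∈ ({i₁, i₂} : Finset κ)} ≤ 2 :=
    (card_le_card_of_injOn b (fun p hp => (mem_filter.1 hp).2) hb.injOn).trans card_le_two
  calc ∑ p : Fin (n + 1), wt (H.submatrix a (b ∘ p.succAbove)).det
      ≤ ∑ p : Fin (n + 1), (((n)! - e) + if b p ∈ ({i₁, i₂} : Finset κ) then e else 0) :=
        sum_le_sum fun p _ => hterm p
    _ = (n + 1) * ((n)! - e) + e * #{p | b p ∈ ({i₁, i₂} : Finset κ)} := by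
        rw [sum_add_distrib, sum_ite, sum_const_zero, sum_const, add_zero, sum_const,
          card_univ, Fintype.card_fin, smul_eq_mul, smul_eq_mul, mul_comm e]
    _ ≤ (n + 1) * ((n)! - e) + e * 2 := by gcongr
    _ = (n + 1)! - 2 * (n - 1)! := succ_mul_factorial_sub_add_eq hn

end FourCycle

theorem typeI_four_cycle_dmin_general {r J L : ℕ} (hJ : 2 ≤ J) (hJL : J + 1 ≤ L)
    (H : Matrix (Fin J) (Fin L) (Rr r))
    (htypeI : ∀ j i, H j i = 0 ∨ ∃ a, H j i = mono a)
    (j1 j2 : Fin J) (i1 i2 : Fin L) (hj : j1 ≠ j2) (hi : i1 ≠ i2)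
    (hcyc : H j1 i1 * H j2 i2 = H j1 i2 * H j2 i1) :
    dmin H ≤ Nat.factorial (J + 1) - 2 * Nat.factorial (J - 1) := by
  have hwt : ∀ j i, wt (H j i) ≤ 1 := fun j i => by
    rcases htypeI j i with h | ⟨a, h⟩ <;> simp [h]
  obtain ⟨S, hiS, hS⟩ : ∃ S : Finset (Fin L), {i1, i2} ⊆ S ∧ #S = J + 1 :=
    exists_superset_card_eq (by rw [card_pair hi]; omega) (by simpa using hJL)
  obtain ⟨t, ht, a, b, ha, hb, hbS, hdet, hmax⟩ :=
    exists_maximal_nonzero_minor_succ H S (by simp [hS])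
  refine (dmin_le_sum_wt_det H a hb hdet hmax).trans ?_
  rw [Fintype.card_fin] at ht
  rcases ht.lt_or_eq with ht | rfl
  · exact (sum_wt_det_succAbove_le_factorial H hwt a b).trans
      ((Nat.factorial_le ht).trans (factorial_le_factorial_succ_sub hJ))
  · have hbS_surj : ∀ i ∈ S, i ∈ Set.range b := fun i hi => by
      obtain ⟨p, -, rfl⟩ := surjOn_of_injOn_of_card_le b (s := univ) (fun p _ => hbS p)
        hb.injOn (by simp [hS]) hi
      exact ⟨p, rfl⟩
    have ha_surj := Finite.injective_iff_surjective.1 ha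
    exact sum_wt_det_succAbove_le_of_fourCycle H hwt hj hi hcyc hJ hb (ha_surj j1) (ha_surj j2)
      (hbS_surj i1 (hiS (by simp))) (hbS_surj i2 (hiS (by simp)))

/-- a 4-cycle in the Tanner graph of a type-I code lowers the bound. -/
theorem typeI_four_cycle_dmin {r J L : ℕ} (hr : 0 < r) (hJ : 2 ≤ J) (hJL : J + 1 ≤ L)
    (H : Matrix (Fin J) (Fin L) (Rr r))
    (htypeI : ∀ j i, H j i = 0 ∨ ∃ a, H j i = mono a)
    (j1 j2 : Fin J) (i1 i2 : Fin L) (hj : j1 ≠ j2) (hi : i1 ≠ i2)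
    (hm11 : ∃ a, H j1 i1 = mono a) (hm12 : ∃ a, H j1 i2 = mono a)
    (hm21 : ∃ a, H j2 i1 = mono a) (hm22 : ∃ a, H j2 i2 = mono a)
    (hcyc : H j1 i1 * H j2 i2 = H j1 i2 * H j2 i1) :
    dmin H ≤ Nat.factorial (J + 1) - 2 * Nat.factorial (J - 1) :=
  typeI_four_cycle_dmin_general hJ hJL H htypeI j1 j2 i1 i2 hj hi hcyc
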